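/- If -(1+√5)/2 < q < -1, then every interior point of J_q has continuum many (i.e., 2^ℵ₀) expansions in base q with digits {0,1}. -/

import Mathlib

def IsExpansionR (q x : ℝ) (c : ℕ → ℕ) : Prop :=
  (∀ k, c k ≤ 1) ∧ HasSum (fun k : ℕ => (c (k + 1) : ℝ) / q ^ (k + 1)) x

def JR (q : ℝ) : Set ℝ := {x | ∃ c, IsExpansionR q x c}

/-!
Write `a = q/(q²-1)` and `b = 1/(q²-1)`, so that `J_q = [a, b]`, `q b = a` and `q a = b + 1`.
A point `y ∈ (a, b)` may take the digit `d` whenever `q y - d` stays in `(a, b)`; both digits are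
possible in the switch region `a + 1 < q y < b`. For `-φ < q < -1` the length `b - a = -1/(q+1)`
of `J_q` exceeds `|q|`. Then, as long as the digits are forced, the distance to the endpoint
the orbit is pushed away from grows by the factor `|q|` at every step, so every orbit in `(a, b)`
reaches the switch region. Taking the choices at the successive switch times from a bit stream
gives an injective map from `ℕ → Bool` into the expansions of every point of `(a, b)`.
-/

namespace NegBaseExpansion

open Set Real goldenRatio

lemma sq_add_lt_one {q : ℝ} (h₁ : -φ < q) (h₂ : q < -ψ) : q ^ 2 + q < 1 := by
  have hfactor : q ^ 2 + q - 1 = (q + φ) * (q + ψ) := by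
    linear_combination (-q) * goldenRatio_add_goldenConj - goldenRatio_mul_goldenConj
  nlinarith [mul_pos (show 0 < q + φ by linarith) (show 0 < -(q + ψ) by linarith)]

lemma hasSum_inv_pow_succ {r : ℝ} (hr : 1 < |r|) :
    HasSum (fun k : ℕ => (r ^ (k + 1))⁻¹) (r - 1)⁻¹ := by
  have hr0 : r ≠ 0 := by rintro rfl; norm_num at hr
  have hr1 : r - 1 ≠ 0 := by rintro h; norm_num [sub_eq_zero.mp h] at hr
  have hgeom := (hasSum_geometric_of_abs_lt_one (r := r⁻¹)
    (by rw [abs_inv]; exact inv_lt_one_of_one_lt₀ hr)).mul_left r⁻¹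
  have hterm : (fun k : ℕ => (r ^ (k + 1))⁻¹) = fun k => r⁻¹ * r⁻¹ ^ k := by
    ext k; rw [← inv_pow, pow_succ']
  have hval : r⁻¹ * (1 - r⁻¹)⁻¹ = (r - 1)⁻¹ := by
    field_simp
  rwa [hterm, ← hval]

lemma abs_mul_sub_half_le {c : ℝ} (hc₀ : 0 ≤ c) (hc₁ : c ≤ 1) (t : ℝ) :
    |c * t - t / 2| ≤ |t| / 2 := by
  rw [show c * t - t / 2 = (c - 1 / 2) * t by ring, abs_mul]
  have : |c - 1 / 2| ≤ 1 / 2 := abs_le.mpr ⟨by linarith, by linarith⟩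
  nlinarith [abs_nonneg t]

lemma _root_.Bool.toNat_injective : Function.Injective Bool.toNat := by
  decide

noncomputable def lowerEnd (q : ℝ) : ℝ := q / (q ^ 2 - 1)

noncomputable def upperEnd (q : ℝ) : ℝ := 1 / (q ^ 2 - 1)

variable {q : ℝ}

lemma q_mul_upperEnd (q : ℝ) : q * upperEnd q = lowerEnd q := mul_one_div q _

lemma q_mul_lowerEnd (hq : q ^ 2 ≠ 1) : q * lowerEnd q = upperEnd q + 1 := by
  have : q ^ 2 - 1 ≠ 0 := sub_ne_zero.mpr hq
  unfold lowerEnd upperEnd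
  field_simp
  ring

lemma neg_lt_upperEnd_sub_lowerEnd (hq : q < -1) (hφ : q ^ 2 + q < 1) :
    -q < upperEnd q - lowerEnd q := by
  have : 0 < q ^ 2 - 1 := by nlinarith
  unfold lowerEnd upperEnd
  rw [← sub_div, lt_div_iff₀ this]
  nlinarith

/-- Each term `c t` with `c ∈ [0, 1]` lies between `(t - |t|)/2` and `(t + |t|)/2`, and these
terms sum to the two endpoints. -/
lemma JR_subset_Icc (hq : q < -1) : JR q ⊆ Icc (lowerEnd q) (upperEnd q) := by
  rintro x ⟨c, hc, hx⟩
  have hq1 : 1 < |q| := by rw [abs_of_neg (by linarith)]; linarith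
  have hsum := hasSum_inv_pow_succ hq1
  have habs := hasSum_inv_pow_succ (r := |q|) (by rwa [abs_abs])
  simp only [← abs_pow, ← abs_inv] at habs
  rw [abs_of_neg (by linarith)] at habs
  have hbound (k : ℕ) := abs_le.mp <| abs_mul_sub_half_le (c := (c (k + 1) : ℝ))
    (Nat.cast_nonneg _) (by exact_mod_cast hc (k + 1)) (q ^ (k + 1))⁻¹
  have hq2 : q ^ 2 - 1 ≠ 0 := by nlinarith
  have hq' : q - 1 ≠ 0 := by linarith
  have hq'' : -q - 1 ≠ 0 := by linarith
  constructor
  · refine le_trans (le_of_eq ?_) (hasSum_le (fun k => ?_) ((hsum.sub habs).div_const 2) hx)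
    · unfold lowerEnd
      field_simp
      ring
    · simp only [div_eq_mul_inv (c (k + 1) : ℝ)]
      linarith [(hbound k).1]
  · refine hasSum_le (fun k => ?_) hx ((hsum.add habs).div_const 2) |>.trans_eq ?_
    · simp only [div_eq_mul_inv (c (k + 1) : ℝ)]
      linarith [(hbound k).2]
    · unfold upperEnd
      field_simp
      ring

lemma hasSum_sub_div_pow_succ {y : ℕ → ℝ} {M : ℝ} (hq : 1 < |q|) (hy : ∀ n, |y n| ≤ M) :
    HasSum (fun k : ℕ => (q * y k - y (k + 1)) / q ^ (k + 1)) (y 0) := by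
  have hq0 : q ≠ 0 := by rintro rfl; norm_num at hq
  set g : ℕ → ℝ := fun n => y n / q ^ n
  have hg_le (n : ℕ) : ‖g n‖ ≤ M * |q|⁻¹ ^ n := by
    rw [Real.norm_eq_abs, abs_div, abs_pow, div_eq_mul_inv, ← inv_pow]
    exact mul_le_mul_of_nonneg_right (hy n) (by positivity)
  have hgeom : Summable fun n : ℕ => |q|⁻¹ ^ n :=
    summable_geometric_of_lt_one (by positivity) (inv_lt_one_of_one_lt₀ hq)
  have hg : Summable g := (hgeom.mul_left M).of_norm_bounded hg_le
  have hterm : (fun k : ℕ => (q * y k - y (k + 1)) / q ^ (k + 1)) = fun k => g k - g (k + 1) := by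
    ext k
    simp only [g]
    field_simp
    ring
  have hsum : Summable fun k => g k - g (k + 1) := hg.sub ((summable_nat_add_iff 1).mpr hg)
  rw [hterm, hsum.hasSum_iff_tendsto_nat]
  simp only [Finset.sum_range_sub']
  simpa [g] using tendsto_const_nhds.sub hg.tendsto_atTop_zero

noncomputable def digit (q y : ℝ) (β : Bool) : ℕ :=
  if upperEnd q ≤ q * y then 1 else if q * y ≤ lowerEnd q + 1 then 0 else β.toNat

def IsSwitch (q y : ℝ) : Prop := lowerEnd q + 1 < q * y ∧ q * y < upperEnd q

open Classical in
/-- The state pairs the current remainder with the still unread bits of the steering stream. -/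
noncomputable def step (q : ℝ) (p : ℝ × (ℕ → Bool)) : ℝ × (ℕ → Bool) :=
  (q * p.1 - digit q p.1 (p.2 0), if IsSwitch q p.1 then fun n => p.2 (n + 1) else p.2)

noncomputable def digits (q : ℝ) (p : ℝ × (ℕ → Bool)) (k : ℕ) : ℕ :=
  digit q ((step q)^[k] p).1 (((step q)^[k] p).2 0)

noncomputable def expansion (q x : ℝ) (s : ℕ → Bool) : ℕ → ℕ
  | 0 => 0
  | k + 1 => digits q (x, s) k

lemma digit_le_one (q y : ℝ) (β : Bool) : digit q y β ≤ 1 := by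
  unfold digit
  split_ifs <;> simp [Bool.toNat_le]

lemma digit_of_isSwitch {y : ℝ} (hy : IsSwitch q y) (β : Bool) : digit q y β = β.toNat := by
  rw [digit, if_neg hy.2.not_ge, if_neg hy.1.not_ge]

lemma digit_of_not_isSwitch {y : ℝ} (hy : ¬IsSwitch q y) (β β' : Bool) :
    digit q y β = digit q y β' := by
  rw [IsSwitch, not_and_or, not_lt, not_lt] at hy
  unfold digit
  split_ifs <;> first | rfl | (exfalso; rcases hy with hy | hy <;> linarith)

lemma step_of_not_isSwitch {p : ℝ × (ℕ → Bool)} (hp : ¬IsSwitch q p.1) :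
    step q p = (q * p.1 - digit q p.1 false, p.2) := by
  rw [step, if_neg hp, digit_of_not_isSwitch hp]

lemma digits_iterate (p : ℝ × (ℕ → Bool)) (n k : ℕ) :
    digits q ((step q)^[n] p) k = digits q p (k + n) := by
  simp only [digits, ← Function.iterate_add_apply]

lemma mul_sub_digit_mem_Ioo (hq : q < -1) (hgap : -q < upperEnd q - lowerEnd q) {y : ℝ}
    (hy : y ∈ Ioo (lowerEnd q) (upperEnd q)) (β : Bool) :
    q * y - digit q y β ∈ Ioo (lowerEnd q) (upperEnd q) := by
  have hlo : lowerEnd q < q * y := by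
    rw [← q_mul_upperEnd]; exact mul_lt_mul_of_neg_left hy.2 (by linarith)
  have hhi : q * y < upperEnd q + 1 := by
    rw [← q_mul_lowerEnd (by nlinarith)]; exact mul_lt_mul_of_neg_left hy.1 (by linarith)
  unfold digit
  split_ifs <;> cases β <;> simp only [Bool.toNat_false, Bool.toNat_true, Nat.cast_zero,
    Nat.cast_one, mem_Ioo] <;> constructor <;> linarith

lemma iterate_step_mem_Ioo (hq : q < -1) (hgap : -q < upperEnd q - lowerEnd q)
    {p : ℝ × (ℕ → Bool)} (hp : p.1 ∈ Ioo (lowerEnd q) (upperEnd q)) (n : ℕ) :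
    ((step q)^[n] p).1 ∈ Ioo (lowerEnd q) (upperEnd q) := by
  induction n with
  | zero => exact hp
  | succ n ih =>
    rw [Function.iterate_succ_apply']
    exact mul_sub_digit_mem_Ioo hq hgap ih _

/-- The distance from `y` to the endpoint that the forced digit at `y` pushes the orbit from. -/
noncomputable def gap (q y : ℝ) : ℝ :=
  if upperEnd q ≤ q * y then y - lowerEnd q else upperEnd q - y

lemma gap_pos {y : ℝ} (hy : y ∈ Ioo (lowerEnd q) (upperEnd q)) : 0 < gap q y := by
  unfold gap; split_ifs <;> linarith [hy.1, hy.2]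

lemma gap_le {y : ℝ} (hy : y ∈ Ioo (lowerEnd q) (upperEnd q)) :
    gap q y ≤ upperEnd q - lowerEnd q := by
  unfold gap; split_ifs <;> linarith [hy.1, hy.2]

/-- As `|q| < b - a`, a forced `1` is never followed by a forced `1`, nor a forced `0` by a
forced `0`: the endpoint that the orbit is pushed from alternates. -/
lemma gap_mul_sub_digit (hq : q < -1) (hgap : -q < upperEnd q - lowerEnd q) {y : ℝ}
    (hy : ¬IsSwitch q y) (hy' : ¬IsSwitch q (q * y - digit q y false)) :
    gap q (q * y - digit q y false) = -q * gap q y := by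
  have hqb := q_mul_upperEnd q
  have hqa := q_mul_lowerEnd (q := q) (by nlinarith)
  rw [IsSwitch, not_and_or, not_lt, not_lt] at hy hy'
  by_cases h1 : upperEnd q ≤ q * y
  · have hd : digit q y false = 1 := by rw [digit, if_pos h1]
    have h1' : ¬upperEnd q ≤ q * (q * y - 1) := by
      nlinarith [mul_le_mul_of_nonpos_left (show upperEnd q - 1 ≤ q * y - 1 by linarith)
        (show q ≤ 0 by linarith)]
    simp only [gap, hd, if_pos h1, Nat.cast_one, if_neg h1']
    linarith
  · have h0 : q * y ≤ lowerEnd q + 1 := hy.resolve_right h1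
    have hd : digit q y false = 0 := by rw [digit, if_neg h1, if_pos h0]
    rw [hd, Nat.cast_zero, sub_zero] at hy' ⊢
    have h0' : upperEnd q ≤ q * (q * y) := by
      refine hy'.resolve_left (not_le.mpr ?_)
      nlinarith [mul_le_mul_of_nonpos_left h0 (show q ≤ 0 by linarith)]
    simp only [gap, if_neg h1, if_pos h0']
    linarith

lemma exists_iterate_isSwitch (hq : q < -1) (hgap : -q < upperEnd q - lowerEnd q)
    {p : ℝ × (ℕ → Bool)} (hp : p.1 ∈ Ioo (lowerEnd q) (upperEnd q)) :
    ∃ n, IsSwitch q ((step q)^[n] p).1 := by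
  by_contra! hforced
  have hmem := iterate_step_mem_Ioo hq hgap hp
  have hgrow (n : ℕ) : gap q ((step q)^[n] p).1 = (-q) ^ n * gap q p.1 := by
    induction n with
    | zero => simp
    | succ n ih =>
      have hnext := hforced (n + 1)
      rw [Function.iterate_succ_apply', step_of_not_isSwitch (hforced n)] at hnext ⊢
      rw [gap_mul_sub_digit hq hgap (hforced n) hnext, ih, pow_succ]
      ring
  obtain ⟨n, hn⟩ := pow_unbounded_of_one_lt ((upperEnd q - lowerEnd q) / gap q p.1)
    (show 1 < -q by linarith)
  rw [div_lt_iff₀ (gap_pos hp), ← hgrow] at hn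
  exact (gap_le (hmem n)).not_gt hn

lemma iterate_step_of_forall_not_isSwitch {y : ℝ} {s : ℕ → Bool} {n : ℕ}
    (hforced : ∀ k < n, ¬IsSwitch q ((step q)^[k] (y, s)).1) (s' : ℕ → Bool) :
    (step q)^[n] (y, s') = (((step q)^[n] (y, s)).1, s') := by
  induction n generalizing s' with
  | zero => rfl
  | succ n ih =>
    have ih' := ih (fun k hk => hforced k (by omega))
    obtain ⟨z, hz⟩ : ∃ z, (step q)^[n] (y, s) = (z, s) := ⟨_, ih' s⟩
    have hforced_z : ¬IsSwitch q z := by simpa [hz] using hforced n (by omega)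
    rw [Function.iterate_succ_apply', Function.iterate_succ_apply', ih' s', hz,
      step_of_not_isSwitch (p := (z, s')) hforced_z, step_of_not_isSwitch (p := (z, s)) hforced_z]

lemma exists_isSwitch_iterate_eq (hq : q < -1) (hgap : -q < upperEnd q - lowerEnd q) {y : ℝ}
    (hy : y ∈ Ioo (lowerEnd q) (upperEnd q)) :
    ∃ n z, z ∈ Ioo (lowerEnd q) (upperEnd q) ∧ IsSwitch q z ∧
      ∀ s, (step q)^[n] (y, s) = (z, s) := by
  classical
  have hex := exists_iterate_isSwitch hq hgap (p := (y, fun _ => false)) hy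
  exact ⟨Nat.find hex, _, iterate_step_mem_Ioo hq hgap hy _, Nat.find_spec hex,
    iterate_step_of_forall_not_isSwitch fun k hk => Nat.find_min hex hk⟩

lemma digits_ne_of_head_ne (hq : q < -1) (hgap : -q < upperEnd q - lowerEnd q) {y : ℝ}
    (hy : y ∈ Ioo (lowerEnd q) (upperEnd q)) {s s' : ℕ → Bool} (hs : s 0 ≠ s' 0) :
    digits q (y, s) ≠ digits q (y, s') := by
  obtain ⟨N, z, -, hswitch, hN⟩ := exists_isSwitch_iterate_eq hq hgap hy
  intro heq
  have hdigit := congrFun heq N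
  rw [digits, digits, hN, hN, digit_of_isSwitch hswitch, digit_of_isSwitch hswitch] at hdigit
  exact hs (Bool.toNat_injective hdigit)

lemma digits_ne_of_ne (hq : q < -1) (hgap : -q < upperEnd q - lowerEnd q) {y : ℝ}
    (hy : y ∈ Ioo (lowerEnd q) (upperEnd q)) {s s' : ℕ → Bool} {m : ℕ} (hs : s m ≠ s' m) :
    digits q (y, s) ≠ digits q (y, s') := by
  induction m generalizing y s s' with
  | zero => exact digits_ne_of_head_ne hq hgap hy hs
  | succ m ih =>
    by_cases h0 : s 0 = s' 0
    · obtain ⟨N, z, hz, hswitch, hN⟩ := exists_isSwitch_iterate_eq hq hgap hy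
      have hnext (t : ℕ → Bool) (ht : t 0 = s 0) :
          (step q)^[N + 1] (y, t) = (q * z - digit q z (s 0), fun n => t (n + 1)) := by
        rw [Function.iterate_succ_apply', hN, step, if_pos hswitch]
        simp only [ht]
      intro heq
      refine ih (mul_sub_digit_mem_Ioo hq hgap hz (s 0)) (s := fun n => s (n + 1))
        (s' := fun n => s' (n + 1)) hs (funext fun k => ?_)
      rw [← hnext s rfl, ← hnext s' h0.symm, digits_iterate, digits_iterate, heq]
    · exact digits_ne_of_head_ne hq hgap hy h0

lemma expansion_injective (hq : q < -1) (hgap : -q < upperEnd q - lowerEnd q) {x : ℝ}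
    (hx : x ∈ Ioo (lowerEnd q) (upperEnd q)) : Function.Injective (expansion q x) := by
  intro s s' heq
  by_contra hne
  obtain ⟨m, hm⟩ := Function.ne_iff.mp hne
  exact digits_ne_of_ne hq hgap hx hm (funext fun k => congrFun heq (k + 1))

lemma isExpansionR_expansion (hq : q < -1) (hgap : -q < upperEnd q - lowerEnd q) {x : ℝ}
    (hx : x ∈ Ioo (lowerEnd q) (upperEnd q)) (s : ℕ → Bool) :
    IsExpansionR q x (expansion q x s) := by
  refine ⟨fun k => ?_, ?_⟩
  · cases k with
    | zero => exact zero_le_one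
    | succ k => exact digit_le_one _ _ _
  · have hq1 : 1 < |q| := by rw [abs_of_neg (by linarith)]; linarith
    have hbound (n : ℕ) : |((step q)^[n] (x, s)).1| ≤ |lowerEnd q| + |upperEnd q| := by
      obtain ⟨hlo, hhi⟩ := iterate_step_mem_Ioo hq hgap (p := (x, s)) hx n
      rw [abs_le]
      constructor <;> linarith [neg_abs_le (lowerEnd q), le_abs_self (upperEnd q),
        abs_nonneg (lowerEnd q), abs_nonneg (upperEnd q)]
    convert hasSum_sub_div_pow_succ hq1 hbound using 2 with k
    · rw [Function.iterate_succ_apply', step]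
      simp [expansion, digits]
    · rfl

end NegBaseExpansion

theorem continuum_expansions_neg_base (q : ℝ)
    (hq1 : -((1 + Real.sqrt 5) / 2) < q) (hq2 : q < -1)
    (x : ℝ) (hx : x ∈ interior (JR q)) :
    Cardinal.mk {c : ℕ → ℕ | IsExpansionR q x c} = Cardinal.continuum := by
  open NegBaseExpansion Real in
  have hφ : q ^ 2 + q < 1 := sq_add_lt_one hq1 (by linarith [goldenConj_neg])
  have hgap := neg_lt_upperEnd_sub_lowerEnd hq2 hφ
  have hx' : x ∈ Set.Ioo (lowerEnd q) (upperEnd q) := by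
    simpa using interior_mono (JR_subset_Icc hq2) hx
  refine le_antisymm ?_ ?_
  · calc Cardinal.mk {c : ℕ → ℕ | IsExpansionR q x c}
        ≤ Cardinal.mk (ℕ → ℕ) := Cardinal.mk_subtype_le _
      _ = Cardinal.continuum := by simp
  · have hembed : Function.Injective fun s : ℕ → Bool =>
        (⟨expansion q x s, isExpansionR_expansion hq2 hgap hx' s⟩ :
          {c : ℕ → ℕ | IsExpansionR q x c}) :=
      fun s s' h => expansion_injective hq2 hgap hx' (congrArg Subtype.val h)
    calc Cardinal.continuum = Cardinal.mk (ℕ → Bool) := by simp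
      _ ≤ _ := Cardinal.mk_le_of_injective hembed
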